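/- arXiv:2108.04999 — 7 statements merged into one kernel-verified Lean document; each statement's English description precedes it below -/
import Mathlib

section
/- Let P be a closed convex cone in ℝ^d with nonempty interior Ω and let V be an isometric representation of P on a Hilbert space H (a semigroup of isometries V_x with V_x V_y = V_{x+y}). Define, for a ∈ Ω, the sesquilinear form ⟨ξ, η⟩_a := ⟨ξ_a, η_a⟩ on the space A(V) of additive cocycles of V. Then ⟨·,·⟩_a is a genuine inner product on A(V): if ⟨ξ, ξ⟩_a = 0 for some a ∈ Ω then ξ_x = 0 for all x ∈ P. -/
/-!
The cocycle identity propagates `ξ a = 0` to `ξ (n • a) = 0` for all `n ≥ 1`. Because `a` is an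
interior point of the cone, every `x ∈ P` satisfies `n • a - x ∈ P` for some `n ≥ 1`, and then
`0 = ξ (n • a) = ξ x + V x (ξ (n • a - x))`. The two summands are orthogonal, since
`ξ x ∈ ker (V x)* = (range (V x))ᗮ`, so `ξ x = 0`.
-/

open Filter

theorem exists_nsmul_sub_mem_of_mem_interior {E : Type*} [NormedAddCommGroup E]
    [NormedSpace ℝ E] {P : Set E} (hsmul : ∀ t : ℝ, 0 ≤ t → ∀ x ∈ P, t • x ∈ P) {a : E}
    (ha : a ∈ interior P) (x : E) : ∃ n : ℕ, 0 < n ∧ n • a - x ∈ P := by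
  have hnhds : (a + ·) ⁻¹' P ∈ nhds (0 : E) :=
    (continuous_const_add a).tendsto' 0 a (add_zero a) (mem_interior_iff_mem_nhds.mp ha)
  have habs := (absorbent_nhds_zero (𝕜 := ℝ) hnhds (-x)).eventually
  obtain ⟨n, hnx, hn⟩ :=
    ((tendsto_natCast_atTop_cobounded.eventually habs).and (eventually_gt_atTop 0)).exists
  obtain ⟨v, hv, hvx : (n : ℝ) • v = -x⟩ := hnx rfl
  refine ⟨n, hn, ?_⟩
  have hcone : n • a - x = (n : ℝ) • (a + v) := by
    rw [smul_add, hvx, Nat.cast_smul_eq_nsmul, sub_eq_add_neg]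
  exact hcone ▸ hsmul _ n.cast_nonneg _ hv

theorem nsmul_mem_of_add_mem {M : Type*} [AddMonoid M] {P : Set M}
    (hadd : ∀ x ∈ P, ∀ y ∈ P, x + y ∈ P) {a : M} (ha : a ∈ P) {n : ℕ} (hn : 0 < n) :
    n • a ∈ P := by
  induction n, hn using Nat.le_induction with
  | base => simpa using ha
  | succ n _ ih => simpa [succ_nsmul] using hadd _ ih a ha

theorem cocycle_nsmul_eq_zero {M : Type*} [AddMonoid M] {P : Set M}
    (hadd : ∀ x ∈ P, ∀ y ∈ P, x + y ∈ P) {R H : Type*} [Semiring R] [AddCommMonoid H]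
    [TopologicalSpace H] [Module R H] {V : M → H →L[R] H} {ξ : M → H}
    (hcoc : ∀ x ∈ P, ∀ y ∈ P, ξ (x + y) = ξ x + V x (ξ y)) {a : M} (ha : a ∈ P)
    (hξa : ξ a = 0) {n : ℕ} (hn : 0 < n) : ξ (n • a) = 0 := by
  induction n, hn using Nat.le_induction with
  | base => simpa using hξa
  | succ n hn ih =>
    rw [succ_nsmul', hcoc a ha _ (nsmul_mem_of_add_mem hadd ha hn), hξa, ih, map_zero, add_zero]

theorem ContinuousLinearMap.eq_zero_of_adjoint_apply_eq_zero_of_add_apply_eq_zero {𝕜 E : Type*}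
    [RCLike 𝕜] [NormedAddCommGroup E] [InnerProductSpace 𝕜 E] [CompleteSpace E]
    {T : E →L[𝕜] E} {u v : E} (hu : adjoint T u = 0) (h : u + T v = 0) : u = 0 := by
  have horth : inner 𝕜 u (T v) = 0 := by
    rw [← adjoint_inner_left, hu, inner_zero_left]
  rw [← inner_self_eq_zero (𝕜 := 𝕜)]
  calc inner 𝕜 u u = inner 𝕜 u (u + T v) := by rw [inner_add_right, horth, add_zero]
    _ = 0 := by rw [h, inner_zero_right]

theorem inner_product_on_additive_cocycles_general
    {d : ℕ} (P : Set (EuclideanSpace ℝ (Fin d)))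
    (hadd : ∀ x ∈ P, ∀ y ∈ P, x + y ∈ P)
    (hsmul : ∀ t : ℝ, 0 ≤ t → ∀ x ∈ P, t • x ∈ P)
    {H : Type*} [NormedAddCommGroup H] [InnerProductSpace ℂ H] [CompleteSpace H]
    (V : EuclideanSpace ℝ (Fin d) → (H →L[ℂ] H))
    (ξ : EuclideanSpace ℝ (Fin d) → H)
    (hξker : ∀ x ∈ P, ContinuousLinearMap.adjoint (V x) (ξ x) = 0)
    (hξcoc : ∀ x ∈ P, ∀ y ∈ P, ξ (x + y) = ξ x + V x (ξ y))
    (a : EuclideanSpace ℝ (Fin d)) (ha : a ∈ interior P)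
    (hzero : (inner ℂ (ξ a) (ξ a) : ℂ) = 0) :
    ∀ x ∈ P, ξ x = 0 := by
  intro x hx
  obtain ⟨n, hn, hnx⟩ := exists_nsmul_sub_mem_of_mem_interior hsmul ha x
  have hξna : ξ (n • a) = 0 :=
    cocycle_nsmul_eq_zero hadd hξcoc (interior_subset ha) (inner_self_eq_zero.mp hzero) hn
  have hsplit : ξ x + V x (ξ (n • a - x)) = 0 := by
    rw [← hξcoc x hx _ hnx, add_sub_cancel, hξna]
  exact ContinuousLinearMap.eq_zero_of_adjoint_apply_eq_zero_of_add_apply_eq_zero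
    (hξker x hx) hsplit

theorem inner_product_on_additive_cocycles
    {d : ℕ} (P : Set (EuclideanSpace ℝ (Fin d)))
    (hclosed : IsClosed P) (h0 : (0 : EuclideanSpace ℝ (Fin d)) ∈ P)
    (hadd : ∀ x ∈ P, ∀ y ∈ P, x + y ∈ P)
    (hsmul : ∀ t : ℝ, 0 ≤ t → ∀ x ∈ P, t • x ∈ P)
    (hint : (interior P).Nonempty)
    {H : Type*} [NormedAddCommGroup H] [InnerProductSpace ℂ H] [CompleteSpace H]
    (V : EuclideanSpace ℝ (Fin d) → (H →L[ℂ] H))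
    (hViso : ∀ x ∈ P, ∀ h : H, ‖V x h‖ = ‖h‖)
    (hVsemi : ∀ x ∈ P, ∀ y ∈ P, (V x).comp (V y) = V (x + y))
    (ξ : EuclideanSpace ℝ (Fin d) → H)
    (hξcont : ContinuousOn ξ P)
    (hξker : ∀ x ∈ P, ContinuousLinearMap.adjoint (V x) (ξ x) = 0)
    (hξcoc : ∀ x ∈ P, ∀ y ∈ P, ξ (x + y) = ξ x + V x (ξ y))
    (a : EuclideanSpace ℝ (Fin d)) (ha : a ∈ interior P)
    (hzero : (inner ℂ (ξ a) (ξ a) : ℂ) = 0) :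
    ∀ x ∈ P, ξ x = 0 :=
  inner_product_on_additive_cocycles_general P hadd hsmul V ξ hξker hξcoc a ha hzero
end

section
/- Let P be a closed convex cone in ℝ^d with nonempty interior Ω, and let V be an isometric representation of P on a Hilbert space H. For any two interior points a, b ∈ Ω, the norms on the space of additive cocycles A(V) given by ‖ξ‖_a := ‖ξ_a‖ and ‖ξ‖_b := ‖ξ_b‖ are equivalent: there exist positive constants c, C such that c‖ξ‖_b ≤ ‖ξ‖_a ≤ C‖ξ‖_b for all ξ ∈ A(V). -/
/-!
Orthogonality of `ξ x` and `V x ξ y` together with the isometry of `V x` makes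
`x ↦ ‖ξ x‖²` additive on the cone, so `‖ξ (k • x)‖ = √k ‖ξ x‖` and `‖ξ‖` is monotone
for the cone order. Since `a` is interior, `a - b / k` lies in the cone for large `k`,
i.e. `b ≤ k • a`, whence `‖ξ b‖ ≤ √k ‖ξ a‖`; the other bound is symmetric.
-/

open scoped InnerProductSpace

theorem AddSubmonoid.exists_nsmul_sub_mem_of_mem_interior {E : Type*} [AddCommGroup E]
    [Module ℝ E] [TopologicalSpace E] [IsTopologicalAddGroup E] [ContinuousSMul ℝ E]
    (S : AddSubmonoid E) {a : E} (ha : a ∈ interior (S : Set E)) (b : E) :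
    ∃ k : ℕ, 0 < k ∧ k • a - b ∈ S := by
  have hlim : Filter.Tendsto (fun n : ℕ => a - (n : ℝ)⁻¹ • b) Filter.atTop (nhds a) := by
    simpa using tendsto_const_nhds.sub ((tendsto_inv_atTop_nhds_zero_nat (𝕜 := ℝ)).smul_const b)
  obtain ⟨k, hkS, hk⟩ :=
    ((hlim.eventually (mem_interior_iff_mem_nhds.mp ha)).and
      (Filter.eventually_gt_atTop 0)).exists
  refine ⟨k, hk, ?_⟩
  have hk' : (k : ℝ) ≠ 0 := by positivity
  convert S.nsmul_mem hkS k using 1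
  rw [← Nat.cast_smul_eq_nsmul ℝ, ← Nat.cast_smul_eq_nsmul ℝ, smul_sub, smul_smul,
    mul_inv_cancel₀ hk', one_smul]

structure IsAdditiveCocycle {M 𝕜 H : Type*} [AddMonoid M] [RCLike 𝕜] [NormedAddCommGroup H]
    [InnerProductSpace 𝕜 H] [CompleteSpace H] (S : AddSubmonoid M) (V : M → H →L[𝕜] H)
    (ξ : M → H) : Prop where
  adjoint_apply_eq_zero : ∀ x ∈ S, ContinuousLinearMap.adjoint (V x) (ξ x) = 0
  map_add : ∀ x ∈ S, ∀ y ∈ S, ξ (x + y) = ξ x + V x (ξ y)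

namespace IsAdditiveCocycle

variable {M 𝕜 H : Type*} [AddMonoid M] [RCLike 𝕜] [NormedAddCommGroup H]
  [InnerProductSpace 𝕜 H] [CompleteSpace H] {S : AddSubmonoid M} {V : M → H →L[𝕜] H}
  {ξ : M → H}

theorem norm_sq_add (hξ : IsAdditiveCocycle S V ξ) (hV : ∀ x ∈ S, ∀ h : H, ‖V x h‖ = ‖h‖)
    {x y : M} (hx : x ∈ S) (hy : y ∈ S) :
    ‖ξ (x + y)‖ ^ 2 = ‖ξ x‖ ^ 2 + ‖ξ y‖ ^ 2 := by
  have horth : ⟪ξ x, V x (ξ y)⟫_𝕜 = 0 := by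
    rw [← ContinuousLinearMap.adjoint_inner_left, hξ.adjoint_apply_eq_zero x hx, inner_zero_left]
  rw [hξ.map_add x hx y hy, ← hV x hx (ξ y)]
  simpa only [sq] using norm_add_sq_eq_norm_sq_add_norm_sq_of_inner_eq_zero _ _ horth

theorem norm_le_norm_add (hξ : IsAdditiveCocycle S V ξ) (hV : ∀ x ∈ S, ∀ h : H, ‖V x h‖ = ‖h‖)
    {x y : M} (hx : x ∈ S) (hy : y ∈ S) : ‖ξ x‖ ≤ ‖ξ (x + y)‖ := by
  rw [← pow_le_pow_iff_left₀ (norm_nonneg _) (norm_nonneg _) two_ne_zero,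
    hξ.norm_sq_add hV hx hy]
  exact le_add_of_nonneg_right (sq_nonneg _)

theorem norm_sq_nsmul (hξ : IsAdditiveCocycle S V ξ) (hV : ∀ x ∈ S, ∀ h : H, ‖V x h‖ = ‖h‖)
    {x : M} (hx : x ∈ S) (n : ℕ) : ‖ξ (n • x)‖ ^ 2 = n * ‖ξ x‖ ^ 2 := by
  induction n with
  | zero =>
    have h := hξ.norm_sq_add hV S.zero_mem S.zero_mem
    rw [add_zero] at h
    simp only [zero_smul, Nat.cast_zero, zero_mul]
    linarith
  | succ n ih =>
    rw [succ_nsmul, hξ.norm_sq_add hV (S.nsmul_mem hx n) hx, ih]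
    push_cast
    ring

theorem norm_le_sqrt_mul_norm (hξ : IsAdditiveCocycle S V ξ)
    (hV : ∀ x ∈ S, ∀ h : H, ‖V x h‖ = ‖h‖) {x y z : M} (hx : x ∈ S) (hy : y ∈ S) (hz : z ∈ S)
    {k : ℕ} (hxz : x + z = k • y) : ‖ξ x‖ ≤ √k * ‖ξ y‖ := by
  calc ‖ξ x‖ ≤ ‖ξ (x + z)‖ := hξ.norm_le_norm_add hV hx hz
    _ = √(‖ξ (k • y)‖ ^ 2) := by rw [hxz, Real.sqrt_sq (norm_nonneg _)]
    _ = √k * ‖ξ y‖ := by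
      rw [hξ.norm_sq_nsmul hV hy, Real.sqrt_mul k.cast_nonneg, Real.sqrt_sq (norm_nonneg _)]

end IsAdditiveCocycle

theorem equivalent_norms_on_additive_cocycles_general
    {d : ℕ} (P : Set (EuclideanSpace ℝ (Fin d)))
    (h0 : (0 : EuclideanSpace ℝ (Fin d)) ∈ P)
    (hadd : ∀ x ∈ P, ∀ y ∈ P, x + y ∈ P)
    {H : Type*} [NormedAddCommGroup H] [InnerProductSpace ℂ H] [CompleteSpace H]
    (V : EuclideanSpace ℝ (Fin d) → (H →L[ℂ] H))
    (hViso : ∀ x ∈ P, ∀ h : H, ‖V x h‖ = ‖h‖)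
    (a b : EuclideanSpace ℝ (Fin d)) (ha : a ∈ interior P) (hb : b ∈ interior P) :
    ∃ c C : ℝ, 0 < c ∧ 0 < C ∧
      ∀ ξ : EuclideanSpace ℝ (Fin d) → H,
        ContinuousOn ξ P →
        (∀ x ∈ P, ContinuousLinearMap.adjoint (V x) (ξ x) = 0) →
        (∀ x ∈ P, ∀ y ∈ P, ξ (x + y) = ξ x + V x (ξ y)) →
        c * ‖ξ b‖ ≤ ‖ξ a‖ ∧ ‖ξ a‖ ≤ C * ‖ξ b‖ := by
  let S : AddSubmonoid (EuclideanSpace ℝ (Fin d)) :=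
    { carrier := P, add_mem' := fun hx hy => hadd _ hx _ hy, zero_mem' := h0 }
  obtain ⟨k, hk, hkS⟩ := S.exists_nsmul_sub_mem_of_mem_interior ha b
  obtain ⟨m, hm, hmS⟩ := S.exists_nsmul_sub_mem_of_mem_interior hb a
  refine ⟨(√k)⁻¹, √m, by positivity, by positivity, fun ξ _ hker hcoc => ?_⟩
  have hξ : IsAdditiveCocycle S V ξ := ⟨hker, hcoc⟩
  constructor
  · rw [inv_mul_le_iff₀ (by positivity)]
    exact hξ.norm_le_sqrt_mul_norm hViso (interior_subset hb) (interior_subset ha) hkS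
      (add_sub_cancel _ _)
  · exact hξ.norm_le_sqrt_mul_norm hViso (interior_subset ha) (interior_subset hb) hmS
      (add_sub_cancel _ _)

theorem equivalent_norms_on_additive_cocycles
    {d : ℕ} (P : Set (EuclideanSpace ℝ (Fin d)))
    (hclosed : IsClosed P) (h0 : (0 : EuclideanSpace ℝ (Fin d)) ∈ P)
    (hadd : ∀ x ∈ P, ∀ y ∈ P, x + y ∈ P)
    (hsmul : ∀ t : ℝ, 0 ≤ t → ∀ x ∈ P, t • x ∈ P)
    (hint : (interior P).Nonempty)
    {H : Type*} [NormedAddCommGroup H] [InnerProductSpace ℂ H] [CompleteSpace H]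
    (V : EuclideanSpace ℝ (Fin d) → (H →L[ℂ] H))
    (hViso : ∀ x ∈ P, ∀ h : H, ‖V x h‖ = ‖h‖)
    (hVsemi : ∀ x ∈ P, ∀ y ∈ P, (V x).comp (V y) = V (x + y))
    (a b : EuclideanSpace ℝ (Fin d)) (ha : a ∈ interior P) (hb : b ∈ interior P) :
    ∃ c C : ℝ, 0 < c ∧ 0 < C ∧
      ∀ ξ : EuclideanSpace ℝ (Fin d) → H,
        ContinuousOn ξ P →
        (∀ x ∈ P, ContinuousLinearMap.adjoint (V x) (ξ x) = 0) →
        (∀ x ∈ P, ∀ y ∈ P, ξ (x + y) = ξ x + V x (ξ y)) →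
        c * ‖ξ b‖ ≤ ‖ξ a‖ ∧ ‖ξ a‖ ≤ C * ‖ξ b‖ :=
  equivalent_norms_on_additive_cocycles_general P h0 hadd V hViso a b ha hb
end

section
/- Let G be a topological group with a subsemigroup P containing the identity e, and let Ω be the interior of P. Assume Ω is nonempty, Ω·Ω⁻¹ = G (equivalently every element of G can be written as a·b⁻¹ with a, b ∈ Ω), Ω·P ⊆ Ω, P·Ω ⊆ Ω, and G is second countable. Then there exists a sequence (a_k) in Ω with a_k < a_{k+1} (i.e. a_k⁻¹ a_{k+1} ∈ Ω) which is cofinal: for every g ∈ G there exists k with g < a_k (i.e. g⁻¹ a_k ∈ Ω). -/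
/-!
Ω is open, so a countable dense subset `c` of Ω already meets every nonempty open set
`{x ∈ Ω | g < x}`, and also every `{x ∈ Ω | u < x, v < x}`, which is nonempty because `Ω Ω⁻¹ = G`
provides common strict upper bounds. Hence `c` is cofinal and directed for `<`, and a directed
sequence contains an increasing chain passing above each of its terms (`Directed.sequence`).
-/

open TopologicalSpace

theorem Set.Nonempty.exists_seq_mem_forall_isOpen {X : Type*} [TopologicalSpace X]
    [SecondCountableTopology X] {s : Set X} (hs : s.Nonempty) :
    ∃ c : ℕ → X, (∀ n, c n ∈ s) ∧ ∀ U, IsOpen U → (s ∩ U).Nonempty → ∃ n, c n ∈ U := by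
  have := hs.to_subtype
  obtain ⟨u, hu⟩ := exists_dense_seq s
  refine ⟨fun n => u n, fun n => (u n).2, fun U hU ⟨x, hxs, hxU⟩ => ?_⟩
  exact hu.exists_mem_open (hU.preimage continuous_subtype_val) ⟨⟨x, hxs⟩, hxU⟩

section Group

variable {G : Type*} [Group G] {Ω : Set G}

theorem inv_mul_mem_trans (hΩΩ : ∀ x ∈ Ω, ∀ y ∈ Ω, x * y ∈ Ω) {x y z : G}
    (hxy : x⁻¹ * y ∈ Ω) (hyz : y⁻¹ * z ∈ Ω) : x⁻¹ * z ∈ Ω := by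
  simpa [mul_assoc] using hΩΩ _ hxy _ hyz

theorem exists_inv_mul_mem_and_inv_mul_mem (hΩG : ∀ g : G, ∃ a ∈ Ω, ∃ b ∈ Ω, g = a * b⁻¹)
    (u v : G) : ∃ w, u⁻¹ * w ∈ Ω ∧ v⁻¹ * w ∈ Ω := by
  obtain ⟨a, ha, b, hb, hab⟩ := hΩG (u⁻¹ * v)
  refine ⟨u * a, by simpa using ha, ?_⟩
  have hv : v = u * a * b⁻¹ := by rw [mul_assoc, ← hab, mul_inv_cancel_left]
  simpa [hv, mul_assoc] using hb

variable [TopologicalSpace G] [ContinuousMul G]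

theorem exists_inv_mul_mem_of_forall_isOpen (hΩ : IsOpen Ω)
    (hΩG : ∀ g : G, ∃ a ∈ Ω, ∃ b ∈ Ω, g = a * b⁻¹) {c : ℕ → G}
    (hc : ∀ U, IsOpen U → (Ω ∩ U).Nonempty → ∃ n, c n ∈ U) (g : G) :
    ∃ n, g⁻¹ * c n ∈ Ω := by
  obtain ⟨a, ha, b, hb, rfl⟩ := hΩG g
  exact hc _ (hΩ.preimage (continuous_const_mul _)) ⟨a, ha, by simpa [mul_assoc] using hb⟩

theorem directed_inv_mul_mem_of_forall_isOpen (hΩ : IsOpen Ω)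
    (hΩΩ : ∀ x ∈ Ω, ∀ y ∈ Ω, x * y ∈ Ω) (hΩG : ∀ g : G, ∃ a ∈ Ω, ∃ b ∈ Ω, g = a * b⁻¹)
    {c : ℕ → G} (hcΩ : ∀ n, c n ∈ Ω) (hc : ∀ U, IsOpen U → (Ω ∩ U).Nonempty → ∃ n, c n ∈ U) :
    Directed (fun x y => x⁻¹ * y ∈ Ω) c := by
  intro i j
  obtain ⟨w, hiw, hjw⟩ := exists_inv_mul_mem_and_inv_mul_mem hΩG (c i) (c j)
  have hwΩ : w ∈ Ω := by simpa using hΩΩ _ (hcΩ i) _ hiw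
  exact hc _ ((hΩ.preimage (continuous_const_mul _)).inter (hΩ.preimage (continuous_const_mul _)))
    ⟨w, hwΩ, hiw, hjw⟩

end Group

theorem exists_increasing_cofinal_sequence_general
    {G : Type*} [Group G] [TopologicalSpace G] [IsTopologicalGroup G]
    [SecondCountableTopology G]
    (P : Set G)
    (hΩG : ∀ g : G, ∃ a ∈ interior P, ∃ b ∈ interior P, g = a * b⁻¹)
    (hΩP : ∀ w ∈ interior P, ∀ p ∈ P, w * p ∈ interior P) :
    ∃ a : ℕ → G, (∀ k, a k ∈ interior P) ∧
      (∀ k, (a k)⁻¹ * a (k + 1) ∈ interior P) ∧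
      (∀ g : G, ∃ k, g⁻¹ * a k ∈ interior P) := by
  have hΩΩ : ∀ x ∈ interior P, ∀ y ∈ interior P, x * y ∈ interior P :=
    fun x hx y hy => hΩP x hx y (interior_subset hy)
  obtain ⟨a, ha, -⟩ := hΩG 1
  obtain ⟨c, hcΩ, hc⟩ := Set.Nonempty.exists_seq_mem_forall_isOpen ⟨a, ha⟩
  have hdir := directed_inv_mul_mem_of_forall_isOpen isOpen_interior hΩΩ hΩG hcΩ hc
  refine ⟨c ∘ hdir.sequence c, fun k => hcΩ _, hdir.sequence_mono_nat, fun g => ?_⟩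
  obtain ⟨n, hn⟩ := exists_inv_mul_mem_of_forall_isOpen isOpen_interior hΩG hc g
  exact ⟨Encodable.encode n + 1, inv_mul_mem_trans hΩΩ hn (hdir.rel_sequence n)⟩

theorem exists_increasing_cofinal_sequence
    {G : Type*} [Group G] [TopologicalSpace G] [IsTopologicalGroup G]
    [SecondCountableTopology G]
    (P : Set G) (hone : (1 : G) ∈ P)
    (hmul : ∀ x ∈ P, ∀ y ∈ P, x * y ∈ P)
    (hΩne : (interior P).Nonempty)
    (hΩG : ∀ g : G, ∃ a ∈ interior P, ∃ b ∈ interior P, g = a * b⁻¹)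
    (hΩP : ∀ w ∈ interior P, ∀ p ∈ P, w * p ∈ interior P)
    (hPΩ : ∀ p ∈ P, ∀ w ∈ interior P, p * w ∈ interior P) :
    ∃ a : ℕ → G, (∀ k, a k ∈ interior P) ∧
      (∀ k, (a k)⁻¹ * a (k + 1) ∈ interior P) ∧
      (∀ g : G, ∃ k, g⁻¹ * a k ∈ interior P) :=
  exists_increasing_cofinal_sequence_general P hΩG hΩP
end

section
/- Let G be a topological group with Lie semigroup P (closed subsemigroup containing e, interior Ω dense in P, PP⁻¹ = P⁻¹P = G), and let A be a P-space with P ⊆ A. Let a ∈ Ω, x ∈ ∂A (the boundary of A), and b ∈ G with e < b < a (i.e. b ∈ Ω and b⁻¹a ∈ Ω). Then b·x ∈ int(A) \ a·A. -/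
theorem boundary_point_translate_in_interior_minus_translate_general
    {G : Type*} [Group G] [TopologicalSpace G]
    (P : Set G) (A : Set G) (hAclosed : IsClosed A)
    (hΩA : ∀ w ∈ interior P, ∀ y ∈ A, w * y ∈ interior A)
    (a : G) (x : G) (hx : x ∈ frontier A)
    (b : G) (hb : b ∈ interior P) (hba : b⁻¹ * a ∈ interior P) :
    b * x ∈ interior A ∧ b * x ∉ (fun y => a * y) '' A := by
  obtain ⟨hxA, hx_not_int⟩ : x ∈ A \ interior A := hAclosed.frontier_eq ▸ hx
  refine ⟨hΩA b hb x hxA, ?_⟩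
  rintro ⟨y, hy, hxy⟩
  -- `b x = a y` makes `x = (b⁻¹ a) y` a point of `Ω A ⊆ int A`.
  exact hx_not_int (by simpa [mul_assoc, hxy] using hΩA _ hba y hy)

theorem boundary_point_translate_in_interior_minus_translate
    {G : Type*} [Group G] [TopologicalSpace G] [IsTopologicalGroup G]
    (P : Set G) (hone : (1 : G) ∈ P) (hPclosed : IsClosed P)
    (hmul : ∀ x ∈ P, ∀ y ∈ P, x * y ∈ P)
    (hdense : P ⊆ closure (interior P))
    (hΩΩ : ∀ u ∈ interior P, ∀ v ∈ interior P, u * v ∈ interior P)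
    (A : Set G) (hAne : A.Nonempty) (hAproper : A ≠ Set.univ)
    (hAclosed : IsClosed A)
    (hPA : ∀ p ∈ P, ∀ x ∈ A, p * x ∈ A)
    (hPsubA : P ⊆ A)
    (hΩA : ∀ w ∈ interior P, ∀ y ∈ A, w * y ∈ interior A)
    (a : G) (haΩ : a ∈ interior P)
    (x : G) (hx : x ∈ frontier A)
    (b : G) (hb : b ∈ interior P) (hba : b⁻¹ * a ∈ interior P) :
    b * x ∈ interior A ∧ b * x ∉ (fun y => a * y) '' A :=
  boundary_point_translate_in_interior_minus_translate_general P A hAclosed hΩA a x hx b hb hba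
end

section
/- Let G be a locally compact group, E ⊆ G a compact set with nonempty interior, and (x_n) a sequence in G with no convergent subsequence. Then there exists a subsequence (x_{n_k}) such that the translates E·x_{n_k} are pairwise disjoint. -/
/-!
A sequence with no convergent subsequence eventually leaves every compact set. If `E·a` meets
`E·b` then `a * b⁻¹ ∈ E⁻¹ * E`, so for each fixed `b` the translates `E·xₙ` are eventually
disjoint from `E·b`, and a subsequence with pairwise disjoint translates is picked greedily.
-/

open Filter Topology
open scoped Pointwise

theorem tendsto_cocompact_of_not_exists_tendsto_subseq {X : Type*} [TopologicalSpace X]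
    [FirstCountableTopology X] {x : ℕ → X}
    (hx : ¬ ∃ (a : X) (φ : ℕ → ℕ), StrictMono φ ∧ Tendsto (x ∘ φ) atTop (𝓝 a)) :
    Tendsto x atTop (cocompact X) := by
  refine hasBasis_cocompact.tendsto_right_iff.mpr fun K hK => ?_
  by_contra hfreq
  obtain ⟨ψ, hψ, hψK⟩ := extraction_of_frequently_atTop (not_eventually.mp hfreq)
  obtain ⟨a, -, φ, hφ, hlim⟩ := hK.isSeqCompact fun n => not_not.mp (hψK n)
  exact hx ⟨a, ψ ∘ φ, hψ.comp hφ, hlim⟩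

theorem exists_strictMono_forall_lt_of_eventually {P : ℕ → ℕ → Prop}
    (hP : ∀ m, ∀ᶠ n in atTop, P n m) :
    ∃ φ : ℕ → ℕ, StrictMono φ ∧ ∀ m k, m < k → P (φ k) (φ m) := by
  have hnext : ∀ N, ∃ n, N < n ∧ ∀ j ≤ N, P n j := fun N =>
    ((eventually_gt_atTop N).and ((Set.finite_Iic N).eventually_all.mpr fun j _ => hP j)).exists
  choose next hnext_gt hnext_P using hnext
  set φ : ℕ → ℕ := fun k => next^[k] 0
  have hφ_succ : ∀ k, φ (k + 1) = next (φ k) := fun k => Function.iterate_succ_apply' next k 0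
  have hφ : StrictMono φ := strictMono_nat_of_lt_succ fun k => hφ_succ k ▸ hnext_gt (φ k)
  refine ⟨φ, hφ, fun m k hmk => ?_⟩
  obtain ⟨k, rfl⟩ : ∃ k', k = k' + 1 := ⟨k - 1, by omega⟩
  rw [hφ_succ]
  exact hnext_P _ _ (hφ.monotone (Nat.le_of_lt_succ hmk))

theorem IsCompact.eventually_disjoint_image_mul_right {G ι : Type*} [Group G]
    [TopologicalSpace G] [IsTopologicalGroup G] {E : Set G} (hE : IsCompact E)
    {l : Filter ι} {x : ι → G} (hx : Tendsto x l (cocompact G)) (b : G) :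
    ∀ᶠ i in l, Disjoint ((· * x i) '' E) ((· * b) '' E) := by
  have hC : IsCompact ((· * b) '' (E⁻¹ * E)) :=
    (hE.inv.mul hE).image (continuous_mul_const b)
  filter_upwards [hx hC.compl_mem_cocompact] with i hi
  rw [Set.disjoint_left]
  rintro _ ⟨g, hg, rfl⟩ ⟨h, hh, hhg⟩
  refine hi ⟨g⁻¹ * h, Set.mul_mem_mul (Set.inv_mem_inv.mpr hg) hh, ?_⟩
  simp only [mul_assoc, hhg, inv_mul_cancel_left]

theorem exists_disjoint_translates_subsequence_general
    {G : Type*} [Group G] [TopologicalSpace G] [IsTopologicalGroup G]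
    [SecondCountableTopology G]
    (E : Set G) (hE : IsCompact E)
    (x : ℕ → G)
    (hx : ¬ ∃ (g : G) (φ : ℕ → ℕ), StrictMono φ ∧
      Filter.Tendsto (x ∘ φ) Filter.atTop (nhds g)) :
    ∃ φ : ℕ → ℕ, StrictMono φ ∧
      ∀ k m, k ≠ m →
        ((fun g => g * x (φ k)) '' E) ∩ ((fun g => g * x (φ m)) '' E) = ∅ := by
  have hcocompact := tendsto_cocompact_of_not_exists_tendsto_subseq hx
  obtain ⟨φ, hφ, hdisj⟩ := exists_strictMono_forall_lt_of_eventually fun m =>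
    hE.eventually_disjoint_image_mul_right hcocompact (x m)
  refine ⟨φ, hφ, fun k m hkm => Set.disjoint_iff_inter_eq_empty.mp ?_⟩
  rcases hkm.lt_or_gt with hlt | hlt
  · exact (hdisj k m hlt).symm
  · exact hdisj m k hlt

theorem exists_disjoint_translates_subsequence
    {G : Type*} [Group G] [TopologicalSpace G] [IsTopologicalGroup G]
    [LocallyCompactSpace G] [SecondCountableTopology G] [T2Space G]
    (E : Set G) (hE : IsCompact E) (hEint : (interior E).Nonempty)
    (x : ℕ → G)
    (hx : ¬ ∃ (g : G) (φ : ℕ → ℕ), StrictMono φ ∧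
      Filter.Tendsto (x ∘ φ) Filter.atTop (nhds g)) :
    ∃ φ : ℕ → ℕ, StrictMono φ ∧
      ∀ k m, k ≠ m →
        ((fun g => g * x (φ k)) '' E) ∩ ((fun g => g * x (φ m)) '' E) = ∅ :=
  exists_disjoint_translates_subsequence_general E hE x hx
end

section
/- Let G be a connected topological group homeomorphic to K × ℝⁿ where K is compact (Malcev–Iwasawa decomposition). Let P ⊆ G be a closed subsemigroup whose interior Ω is nonempty and does not have compact closure, and let A be a P-space containing P such that the complement Aᶜ contains a translate of Ω⁻¹ (in particular Aᶜ does not have compact closure). If the boundary ∂A is compact, then n = 1. -/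
/-!
If `n ≥ 2`, choose a compact cylinder `K × closedBall 0 R` in `G ≅ K × ℝⁿ` containing `∂A`. Its
complement is connected (`K` is connected as a continuous image of `G`) and misses `∂A`, so it lies
entirely in `A` or entirely in `Aᶜ`: one of `A`, `Aᶜ` sits inside a compact set. But `A` contains
`Ω` and `Aᶜ` contains a translate of `Ω⁻¹`, neither of which has compact closure. If `n = 0`, `G`
itself is compact.
-/

open Metric Set Filter

theorem isConnected_setOf_lt_norm {E : Type*} [NormedAddCommGroup E] [NormedSpace ℝ E]
    (hE : 1 < Module.rank ℝ E) {R : ℝ} (hR : 0 ≤ R) : IsConnected {x : E | R < ‖x‖} := by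
  have himage : (fun p : ℝ × E => p.1 • p.2) '' (Ioi R ×ˢ sphere 0 1) = {x : E | R < ‖x‖} := by
    ext x
    constructor
    · rintro ⟨⟨t, u⟩, ⟨ht, hu⟩, rfl⟩
      have ht : R < t := ht
      have hu : ‖u‖ = 1 := mem_sphere_zero_iff_norm.1 hu
      simp only [mem_ofPred_eq, norm_smul, hu, mul_one, Real.norm_eq_abs,
        abs_of_pos (hR.trans_lt ht), ht]
    · intro hx
      have hx0 : ‖x‖ ≠ 0 := (hR.trans_lt hx).ne'
      refine ⟨(‖x‖, ‖x‖⁻¹ • x), ⟨hx, ?_⟩, smul_inv_smul₀ hx0 x⟩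
      simp [norm_smul, hx0]
  rw [← himage]
  exact (isConnected_Ioi.prod (isConnected_sphere hE 0 zero_le_one)).image _
    (continuous_fst.smul continuous_snd).continuousOn

theorem IsPreconnected.subset_or_subset_compl_of_disjoint_frontier {X : Type*}
    [TopologicalSpace X] {s A : Set X} (hs : IsPreconnected s) (hd : Disjoint s (frontier A)) :
    s ⊆ A ∨ s ⊆ Aᶜ := by
  have hcover : s ⊆ interior A ∪ (closure A)ᶜ := fun x hx => by
    by_cases hxA : x ∈ closure A
    · exact Or.inl (by_contra fun hint => hd.notMem_of_mem_left hx ⟨hxA, hint⟩)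
    · exact Or.inr hxA
  exact (hs.subset_or_subset isOpen_interior isClosed_closure.isOpen_compl
    (disjoint_compl_right.mono_left interior_subset_closure) hcover).imp
    (fun h => h.trans interior_subset) (fun h => h.trans (compl_subset_compl.2 subset_closure))

theorem mem_cocompact_or_compl_mem_cocompact_of_isCompact_frontier
    {X K E : Type*} [TopologicalSpace X] [TopologicalSpace K] [CompactSpace K] [ConnectedSpace K]
    [NormedAddCommGroup E] [NormedSpace ℝ E] [ProperSpace E] (hE : 1 < Module.rank ℝ E)
    (e : X ≃ₜ K × E) {A : Set X} (hA : IsCompact (frontier A)) :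
    A ∈ cocompact X ∨ Aᶜ ∈ cocompact X := by
  obtain ⟨R, hR, hfrR⟩ :=
    (hA.image (continuous_snd.comp e.continuous)).isBounded.subset_closedBall_lt 0 0
  set D : Set X := e ⁻¹' (univ ×ˢ closedBall 0 R)
  have hD : IsCompact D := e.isCompact_preimage.2 (isCompact_univ.prod (isCompact_closedBall 0 R))
  have hDc : IsConnected Dᶜ := by
    have : Dᶜ = e ⁻¹' (univ ×ˢ {x : E | R < ‖x‖}) := by ext; simp [D]
    rw [this]
    exact e.isConnected_preimage.2 (isConnected_univ.prod (isConnected_setOf_lt_norm hE hR.le))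
  have hfrD : frontier A ⊆ D := fun x hx => ⟨trivial, hfrR ⟨x, hx, rfl⟩⟩
  rcases hDc.isPreconnected.subset_or_subset_compl_of_disjoint_frontier
    (disjoint_compl_left.mono_right hfrD) with h | h
  · exact Or.inl (mem_cocompact.2 ⟨D, hD, h⟩)
  · exact Or.inr (mem_cocompact.2 ⟨D, hD, h⟩)

theorem compact_boundary_implies_dim_one_general
    {G : Type*} [Group G] [TopologicalSpace G] [IsTopologicalGroup G]
    [ConnectedSpace G]
    {K : Type*} [TopologicalSpace K] [CompactSpace K]
    {n : ℕ} (h : G ≃ₜ K × EuclideanSpace ℝ (Fin n))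
    (P : Set G)
    (hΩnc : ¬ IsCompact (closure (interior P)))
    (A : Set G)
    (hPsubA : P ⊆ A)
    (hAc : ∃ g : G, {y : G | ∃ w ∈ interior P, y = g * w⁻¹} ⊆ Aᶜ)
    (hbd : IsCompact (frontier A)) :
    n = 1 := by
  obtain _ | _ | m := n
  · have : CompactSpace G := h.symm.compactSpace
    exact absurd isClosed_closure.isCompact hΩnc
  · rfl
  · exfalso
    have hE : 1 < Module.rank ℝ (EuclideanSpace ℝ (Fin (m + 2))) := by
      rw [← Module.finrank_eq_rank, finrank_euclideanSpace_fin]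
      norm_cast
      omega
    have : ConnectedSpace K :=
      (Prod.fst_surjective.comp h.surjective).connectedSpace (continuous_fst.comp h.continuous)
    obtain ⟨g, hg⟩ := hAc
    rcases mem_cocompact_or_compl_mem_cocompact_of_isCompact_frontier hE h hbd with hA | hA
    · obtain ⟨C, hC, hAcC⟩ := mem_cocompact'.1 hA
      have hcont : Continuous fun y : G => y⁻¹ * g := continuous_inv.mul continuous_const
      exact hΩnc ((hC.image hcont).closure_of_subset fun w hw =>
        ⟨g * w⁻¹, hAcC (hg ⟨w, hw, rfl⟩), by simp⟩)
    · obtain ⟨C, hC, hAC⟩ := mem_cocompact'.1 hA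
      exact hΩnc (hC.closure_of_subset (interior_subset.trans
        (hPsubA.trans (compl_compl A ▸ hAC))))

theorem compact_boundary_implies_dim_one
    {G : Type*} [Group G] [TopologicalSpace G] [IsTopologicalGroup G]
    [ConnectedSpace G]
    {K : Type*} [TopologicalSpace K] [CompactSpace K]
    {n : ℕ} (h : G ≃ₜ K × EuclideanSpace ℝ (Fin n))
    (P : Set G) (hone : (1 : G) ∈ P) (hPclosed : IsClosed P)
    (hmul : ∀ x ∈ P, ∀ y ∈ P, x * y ∈ P)
    (hΩne : (interior P).Nonempty)
    (hΩnc : ¬ IsCompact (closure (interior P)))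
    (A : Set G) (hAne : A.Nonempty) (hAproper : A ≠ Set.univ)
    (hAclosed : IsClosed A)
    (hPA : ∀ p ∈ P, ∀ x ∈ A, p * x ∈ A)
    (hPsubA : P ⊆ A)
    (hAc : ∃ g : G, {y : G | ∃ w ∈ interior P, y = g * w⁻¹} ⊆ Aᶜ)
    (hbd : IsCompact (frontier A)) :
    n = 1 :=
  compact_boundary_implies_dim_one_general h P hΩnc A hPsubA hAc hbd
end

section
/- Let P be a spanning pointed closed convex cone in ℝ^d (d ≥ 2), let P* = {y : ⟨x, y⟩ ≥ 0 for all x ∈ P} be its dual cone, and let e ∈ int(P*) with ‖e‖ = 1. Let N ⊆ (span{e})^⊥ be a discrete subgroup of rank d−1. Then for every closed subset F ⊆ P, the set F + N is closed in ℝ^d. -/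
/-!
Since `e` lies in the interior of the dual cone, `⟪x, e⟫` dominates a multiple of `‖x‖` on `P`, so
the slices `{x ∈ F | ⟪x, e⟫ ≤ a}` are compact. The functional `⟪·, e⟫` is invariant under
translation by `N`, so near a point `z` the set `F + N` coincides with the sum of such a compact
slice and the closed subgroup `N`, which is closed.
-/

open Pointwise Set

section

variable {E : Type*} [NormedAddCommGroup E] [InnerProductSpace ℝ E]

open scoped RealInnerProductSpace

theorem exists_pos_mul_norm_le_inner_of_mem_interior_dual {P : Set E} {e : E}
    (he : e ∈ interior {y : E | ∀ x ∈ P, 0 ≤ ⟪x, y⟫}) :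
    ∃ c > 0, ∀ x ∈ P, c * ‖x‖ ≤ ⟪x, e⟫ := by
  obtain ⟨ε, hε, hball⟩ := Metric.isOpen_iff.mp isOpen_interior e he
  refine ⟨ε / 2, by positivity, fun x hx => ?_⟩
  rcases eq_or_ne x 0 with rfl | hx0
  · simp
  have hxpos : 0 < ‖x‖ := norm_pos_iff.mpr hx0
  -- test the dual inequality against `e` pushed a distance `ε / 2` away from `x`
  set y := e - (ε / 2 / ‖x‖) • x
  have hy : y ∈ Metric.ball e ε := by
    rw [Metric.mem_ball, dist_eq_norm, sub_sub_cancel_left, norm_neg, norm_smul,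
      Real.norm_of_nonneg (by positivity), div_mul_cancel₀ _ hxpos.ne']
    linarith
  have hxy : 0 ≤ ⟪x, y⟫ := interior_subset (hball hy) x hx
  rw [inner_sub_right, real_inner_smul_right, real_inner_self_eq_norm_sq] at hxy
  have : ε / 2 / ‖x‖ * ‖x‖ ^ 2 = ε / 2 * ‖x‖ := by field_simp
  linarith

theorem isBounded_inter_setOf_inner_le_of_mem_interior_dual {P : Set E} {e : E}
    (he : e ∈ interior {y : E | ∀ x ∈ P, 0 ≤ ⟪x, y⟫}) (a : ℝ) :
    Bornology.IsBounded (P ∩ {x | ⟪x, e⟫ ≤ a}) := by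
  obtain ⟨c, hc, hcoer⟩ := exists_pos_mul_norm_le_inner_of_mem_interior_dual he
  refine (Metric.isBounded_closedBall (x := (0 : E)) (r := a / c)).subset ?_
  rintro x ⟨hxP, hxa⟩
  rw [Metric.mem_closedBall, dist_zero_right, le_div_iff₀ hc, mul_comm]
  exact (hcoer x hxP).trans hxa

theorem IsClosed.isCompact_inter_setOf_inner_le [ProperSpace E] {F P : Set E} {e : E}
    (hF : IsClosed F) (hFP : F ⊆ P) (he : e ∈ interior {y : E | ∀ x ∈ P, 0 ≤ ⟪x, y⟫})
    (a : ℝ) : IsCompact (F ∩ {x | ⟪x, e⟫ ≤ a}) :=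
  Metric.isCompact_of_isClosed_isBounded
    (hF.inter (_root_.isClosed_le (continuous_id.inner continuous_const) continuous_const))
    ((isBounded_inter_setOf_inner_le_of_mem_interior_dual he a).subset
      (inter_subset_inter_left _ hFP))

end

theorem isClosed_add_of_isCompact_inter_setOf_le {G : Type*} [TopologicalSpace G] [AddGroup G]
    [IsTopologicalAddGroup G] {F K : Set G} (hK : IsClosed K) {φ : G → ℝ} (hφ : Continuous φ)
    (hφK : ∀ x, ∀ k ∈ K, φ (x + k) = φ x) (hF : ∀ a, IsCompact (F ∩ {x | φ x ≤ a})) :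
    IsClosed (F + K) := by
  refine closure_subset_iff_isClosed.mp fun z hz => ?_
  set U := {x | φ x < φ z + 1}
  have hU : IsOpen U := isOpen_lt hφ continuous_const
  have hsub : (F + K) ∩ U ⊆ (F ∩ {x | φ x ≤ φ z + 1}) + K := by
    rintro _ ⟨⟨f, hf, k, hk, rfl⟩, hfk⟩
    refine ⟨f, ⟨hf, ?_⟩, k, hk, rfl⟩
    have hfk : φ (f + k) < φ z + 1 := hfk
    exact (hφK f k hk ▸ hfk).le
  have hclosed := hK.add_left_of_isCompact (hF (φ z + 1))
  have hzU : z ∈ closure ((F + K) ∩ U) := by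
    simpa only [inter_comm] using hU.inter_closure ⟨show φ z < φ z + 1 by linarith, hz⟩
  exact add_subset_add_right inter_subset_left (hclosed.closure_subset_iff.mpr hsub hzU)

theorem closed_plus_discrete_subgroup_closed_general
    {d : ℕ}
    (P : Set (EuclideanSpace ℝ (Fin d)))
    (e : EuclideanSpace ℝ (Fin d))
    (he : e ∈ interior {y : EuclideanSpace ℝ (Fin d) |
      ∀ x ∈ P, 0 ≤ (inner ℝ x y : ℝ)})
    (N : AddSubgroup (EuclideanSpace ℝ (Fin d)))
    (hNperp : ∀ m ∈ N, (inner ℝ m e : ℝ) = 0)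
    (hNdisc : DiscreteTopology N) :
    ∀ F : Set (EuclideanSpace ℝ (Fin d)), F ⊆ P → IsClosed F →
      IsClosed (F + (N : Set (EuclideanSpace ℝ (Fin d)))) := by
  intro F hFP hF
  refine isClosed_add_of_isCompact_inter_setOf_le AddSubgroup.isClosed_of_discrete
    (φ := fun x => inner ℝ x e) (continuous_id.inner continuous_const) (fun x m hm => ?_)
    (hF.isCompact_inter_setOf_inner_le hFP he)
  rw [inner_add_left, hNperp m hm, add_zero]

theorem closed_plus_discrete_subgroup_closed
    {d : ℕ} (hd : 2 ≤ d)
    (P : Set (EuclideanSpace ℝ (Fin d)))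
    (hclosed : IsClosed P) (h0 : (0 : EuclideanSpace ℝ (Fin d)) ∈ P)
    (hadd : ∀ x ∈ P, ∀ y ∈ P, x + y ∈ P)
    (hsmul : ∀ t : ℝ, 0 ≤ t → ∀ x ∈ P, t • x ∈ P)
    (hspan : Submodule.span ℝ P = ⊤)
    (hpointed : P ∩ (-P) = {0})
    (e : EuclideanSpace ℝ (Fin d))
    (he : e ∈ interior {y : EuclideanSpace ℝ (Fin d) |
      ∀ x ∈ P, 0 ≤ (inner ℝ x y : ℝ)})
    (hnorme : ‖e‖ = 1)
    (N : AddSubgroup (EuclideanSpace ℝ (Fin d)))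
    (hNperp : ∀ m ∈ N, (inner ℝ m e : ℝ) = 0)
    (hNdisc : DiscreteTopology N)
    (hNrank : ∃ b : Module.Basis (Fin (d - 1)) ℤ N, True) :
    ∀ F : Set (EuclideanSpace ℝ (Fin d)), F ⊆ P → IsClosed F →
      IsClosed (F + (N : Set (EuclideanSpace ℝ (Fin d)))) :=
  closed_plus_discrete_subgroup_closed_general P e he N hNperp hNdisc
end
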